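/- arXiv:1903.12284 — 5 statements merged into one kernel-verified Lean document; each statement's English description precedes it below -/
import Mathlib

section
/- Let G be a group, H ≤ G an almost malnormal subgroup (i.e., for all g ∈ G \ H, g⁻¹Hg ∩ H is finite), and G₀ a finite index normal subgroup of G such that H ∩ G₀ is torsion-free. Then H ∩ G₀ is malnormal in G₀. -/
/-- A subgroup `H` of `G` is *malnormal* if for every `g ∉ H` we have `g⁻¹Hg ∩ H = {1}`. -/
def Subgroup.Malnormal {G : Type*} [Group G] (H : Subgroup G) : Prop :=
  ∀ g : G, g ∉ H → ∀ x : G, x ∈ H → g * x * g⁻¹ ∈ H → x = 1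

/-- A subgroup `H` of `G` is *almost malnormal* if for every `g ∉ H` the intersection
`g⁻¹Hg ∩ H` is finite. -/
def Subgroup.AlmostMalnormal {G : Type*} [Group G] (H : Subgroup G) : Prop :=
  ∀ g : G, g ∉ H → {x : G | x ∈ H ∧ g * x * g⁻¹ ∈ H}.Finite

/-- If `H ≤ G` is almost malnormal and `G₀ ⊴ G` is a finite index normal subgroup such that
`H ∩ G₀` is torsion-free, then `H ∩ G₀` is malnormal in `G₀`. -/
theorem malnormal_of_almostMalnormal_torsionFree
    {G : Type*} [Group G] (H G₀ : Subgroup G) [G₀.Normal] [G₀.FiniteIndex]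
    (hH : H.AlmostMalnormal)
    (htf : ∀ x : G₀, x ∈ H.subgroupOf G₀ → x ≠ 1 → ¬ IsOfFinOrder x) :
    (H.subgroupOf G₀).Malnormal := by
  intro g hg x hx hgx
  by_contra hxne
  have hgH : (g : G) ∉ H := fun h => hg (by simpa [Subgroup.mem_subgroupOf] using h)
  have hfin := hH g hgH
  have hxH : (x : G) ∈ H := hx
  have hgxH : (g : G) * x * (g : G)⁻¹ ∈ H := hgx
  have hmem : ∀ n : ℕ, ((x : G)) ^ n ∈ {y : G | y ∈ H ∧ (g : G) * y * (g : G)⁻¹ ∈ H} := by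
    intro n
    refine ⟨pow_mem hxH n, ?_⟩
    rw [(conj_pow : ((g : G) * x * (g : G)⁻¹) ^ n = _).symm]; exact pow_mem hgxH n
  have hninj : ¬ IsOfFinOrder x := htf x hx hxne
  have hinj : Function.Injective fun n : ℕ => x ^ n :=
    injective_pow_iff_not_isOfFinOrder.mpr hninj
  have hinj' : Function.Injective fun n : ℕ => ((x : G)) ^ n := by
    intro a b hab
    exact hinj (Subtype.ext (by simpa using hab))
  exact Set.infinite_range_of_injective hinj' (hfin.subset (Set.range_subset_iff.2 hmem))
end

section
/- Let X be a geodesic metric space and suppose the geodesic triangle Δabc with sides ab, bc, ac is δ-thin relative to a subspace F, meaning each side decomposes into two corner segments (each corner segment at a vertex δ-fellow travels the corresponding corner segment of the other side at that vertex) and a fat part contained in the δ-neighborhood of F. If the fat part of side ac has length at most M, then the lengths of the fat parts of sides ab and bc differ by at most M + 3δ. -/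
/-- **Fat part transfer for relatively thin triangles** (Lemma 2.12 of the paper).

Let `Δabc` be a geodesic triangle in a metric space `X` that is `δ`-thin relative to a
subspace `F`.  Each side decomposes (in order along the geodesic side) into a corner
segment at each vertex and a middle *fat part*; we record the endpoints of the fat parts:
`pab, pba` on the side `ab`, `pbc, pcb` on the side `bc`, and `pac, pca` on the side `ac`
(`pxy` being the fat-part endpoint nearer the vertex `x`).  Thinness relative to `F` means
that the corner segments of the two sides at a common vertex `δ`-fellow travel, so in
particular matched fat-part endpoints are `δ`-close:
`dist pab pac ≤ δ`, `dist pba pbc ≤ δ`, `dist pcb pca ≤ δ`.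

If the fat part of the side `ac` has length at most `M`, then the lengths of the fat
parts of `ab` and of `bc` differ by at most `M + 3δ`. -/
theorem fat_part_transfer {X : Type*} [MetricSpace X]
    (a b c pab pba pbc pcb pac pca : X) (δ M : ℝ)
    -- the fat-part endpoints lie, in order, on the corresponding geodesic sides:
    (hab : dist a pab + dist pab pba + dist pba b = dist a b)
    (hbc : dist b pbc + dist pbc pcb + dist pcb c = dist b c)
    (hac : dist a pac + dist pac pca + dist pca c = dist a c)
    -- the triangle is δ-thin relative to F: matched corner-segment endpoints are δ-close:
    (ha : dist pab pac ≤ δ) (hb : dist pba pbc ≤ δ) (hc : dist pcb pca ≤ δ)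
    -- the fat part of the side ac has length at most M:
    (hM : dist pac pca ≤ M) :
    |dist pab pba - dist pbc pcb| ≤ M + 3 * δ := by
  have h1 := dist_triangle pab pac pba
  have h2 := dist_triangle pac pca pba
  have h3 := dist_triangle pca pcb pba
  have h4 := dist_triangle pcb pbc pba
  have g1 := dist_triangle pbc pba pcb
  have g2 := dist_triangle pba pab pcb
  have g3 := dist_triangle pab pac pcb
  have g4 := dist_triangle pac pca pcb
  have e1 : dist pca pcb = dist pcb pca := dist_comm _ _
  have e2 : dist pcb pbc = dist pbc pcb := dist_comm _ _
  have e3 : dist pbc pba = dist pba pbc := dist_comm _ _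
  have e4 : dist pba pab = dist pab pba := dist_comm _ _
  rw [abs_sub_le_iff]
  constructor <;> linarith
end

section
/- Let X be a CAT(0) space and let Z ⊆ X be a convex subspace that is K-attractive for a function K: ℝ≥0 → ℝ≥0, meaning every geodesic with endpoints in the R-neighborhood of Z and length greater than K(R) intersects Z. Then any bi-infinite geodesic γ in X contained in a bounded neighborhood of Z satisfies γ ⊆ Z. -/
/-- A geodesic segment in a metric space `X`, parametrized by arclength on `[0, len]`. -/
structure GeodesicSeg (X : Type*) [MetricSpace X] where
  f : ℝ → X
  len : ℝ
  len_nonneg : 0 ≤ len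
  isom : ∀ ⦃s t : ℝ⦄, s ∈ Set.Icc (0 : ℝ) len → t ∈ Set.Icc (0 : ℝ) len →
    dist (f s) (f t) = |s - t|

variable {X : Type*} [MetricSpace X]

/-- A subset `Z` of `X` is (geodesically) convex if every geodesic segment with
endpoints in `Z` is entirely contained in `Z`. -/
def GeodConvex (Z : Set X) : Prop :=
  ∀ g : GeodesicSeg X, g.f 0 ∈ Z → g.f g.len ∈ Z → ∀ s ∈ Set.Icc (0 : ℝ) g.len, g.f s ∈ Z

/-- A subset `Z` of `X` is `K`-attractive if for every `R > 0`, every geodesic segment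
with both endpoints in the `R`-neighborhood of `Z` and of length `> K R` meets `Z`. -/
def Attractive (K : ℝ → ℝ) (Z : Set X) : Prop :=
  ∀ R > (0 : ℝ), ∀ g : GeodesicSeg X,
    (∃ z ∈ Z, dist (g.f 0) z ≤ R) → (∃ z ∈ Z, dist (g.f g.len) z ≤ R) →
    g.len > K R → ∃ s ∈ Set.Icc (0 : ℝ) g.len, g.f s ∈ Z

/-- Restriction of a geodesic line to a segment. -/
def segOf (γ : ℝ → X) (hγ : ∀ s t : ℝ, dist (γ s) (γ t) = |s - t|)
    (t₀ l : ℝ) (hl : 0 ≤ l) : GeodesicSeg X where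
  f s := γ (t₀ + s)
  len := l
  len_nonneg := hl
  isom s t _ _ := by rw [hγ]; congr 1; ring

/-- **Attractive convex subspaces absorb bi-infinite geodesics.**
Let `Z ⊆ X` be a closed convex subspace that is `K`-attractive.  Then any bi-infinite
geodesic `γ : ℝ → X` contained in a bounded neighborhood of `Z` satisfies `γ ⊆ Z`. -/

theorem biinfinite_geodesic_subset_of_attractive
    (Z : Set X) (hconv : GeodConvex Z) (hclosed : IsClosed Z)
    (K : ℝ → ℝ) (hattr : Attractive K Z)
    (γ : ℝ → X) (hγ : ∀ s t : ℝ, dist (γ s) (γ t) = |s - t|)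
    (R : ℝ) (hR : 0 < R) (hnbhd : ∀ t : ℝ, ∃ z ∈ Z, dist (γ t) z ≤ R) :
    ∀ t : ℝ, γ t ∈ Z := by
  intro t
  set L : ℝ := max (K R) 0 + 1 with hLdef
  have hL0 : 0 ≤ L := by positivity
  have hLK : K R < L := lt_of_le_of_lt (le_max_left _ _) (by linarith [le_max_right (K R) 0])
  -- right segment [t, t+L]
  obtain ⟨s₁, hs₁, hz₁⟩ := hattr R hR (segOf γ hγ t L hL0)
    (hnbhd (t + 0)) (hnbhd (t + L)) hLK
  -- left segment [t-L, t]
  obtain ⟨s₂, hs₂, hz₂⟩ := hattr R hR (segOf γ hγ (t - L) L hL0)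
    (hnbhd (t - L + 0)) (hnbhd (t - L + L)) hLK
  -- convexity between b := t-L+s₂ and a := t+s₁
  simp only [segOf, Set.mem_Icc] at hs₁ hs₂ hz₁ hz₂
  set b : ℝ := t - L + s₂
  set a : ℝ := t + s₁
  have hba : 0 ≤ a - b := by dsimp [a, b]; linarith [hs₁.1, hs₂.2]
  have := hconv (segOf γ hγ b (a - b) hba)
    (by simpa [segOf] using hz₂)
    (by simp only [segOf]; convert hz₁ using 2; ring)
    (t - b) ⟨by dsimp [b]; linarith [hs₂.2], by simp only [segOf]; dsimp [a, b]; linarith [hs₁.1]⟩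
  simpa [segOf] using this
end

section
/- Let X be a compact virtually special non-positively curved cube complex with universal cover X̃, and suppose every hyperplane subgroup π₁(W) ≤ π₁(X) is separable. Then for every R ≥ 0 there exists a finite regular cover C → X such that every hyperplane V of C is R-embedded in C; moreover, if W̃₁, W̃₂ are distinct elevations of a hyperplane V of C to X̃, then d(W̃₁, W̃₂) ≥ 2R. -/
open Pointwise

/-- A subgroup `H` of `G` is *separable* if it equals the intersection of all
finite index subgroups of `G` containing it. -/
def Subgroup.IsSeparable {G : Type*} [Group G] (H : Subgroup G) : Prop :=
  H = ⨅ K ∈ {K : Subgroup G | H ≤ K ∧ K.FiniteIndex}, K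

/-- **R-embedded hyperplanes in a finite cover** (Proposition 5.5 of the paper),
formulated via deck transformations.

Let `X` be a compact virtually special non-positively curved cube complex with universal
cover `X̃`, so that `G = π₁(X)` acts properly and cocompactly by isometries on `X̃`.  The
hyperplanes of `X` are represented by lifts `W₁, …, W_n ⊆ X̃` with cocompact stabilizers
`H₁, …, H_n ≤ G`, and each hyperplane subgroup `Hᵢ = π₁(Wᵢ)` is separable in `G`.

Then for every `R ≥ 0` there is a finite index normal subgroup `N ⊴ G` (the deck group of
the universal cover over the finite regular cover `C = X̃/N → X`) such that:
* every hyperplane of `C` (i.e. the image of any translate `g • Wᵢ`) is `R`-embedded in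
  `C`:  points of the `R`-neighborhood of `g • Wᵢ` in the same `N`-orbit are in the same
  `(gHᵢg⁻¹ ∩ N)`-orbit; and
* distinct elevations to `X̃` of a hyperplane of `C` (distinct translates `m • (g • Wᵢ)`,
  `m ∈ N`) are at distance at least `2R` from one another. -/
theorem exists_finite_cover_rEmbedded_hyperplanes
    {G X : Type*} [Group G] [MetricSpace X] [MulAction G X]
    (hiso : ∀ (g : G) (x y : X), dist (g • x) (g • y) = dist x y)
    -- the action of `G` on `X̃` is metrically proper and cocompact:
    (hproper : ∀ (x : X) (r : ℝ), {g : G | dist x (g • x) ≤ r}.Finite)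
    (hcocompact : ∃ (x₀ : X) (D : ℝ), ∀ y : X, ∃ g : G, dist y (g • x₀) ≤ D)
    -- the hyperplanes, their stabilizers, cocompactness of `Hᵢ` on `Wᵢ`:
    (n : ℕ) (W : Fin n → Set X) (H : Fin n → Subgroup G)
    (hstab : ∀ (i : Fin n) (g : G), g • W i = W i ↔ g ∈ H i)
    (hWcocpt : ∀ i : Fin n, ∃ (w : X) (D : ℝ), w ∈ W i ∧
      ∀ y ∈ W i, ∃ h ∈ H i, dist y (h • w) ≤ D)
    -- separability of the hyperplane subgroups:
    (hsep : ∀ i : Fin n, (H i).IsSeparable)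
    (R : ℝ) (hR : 0 ≤ R) :
    ∃ N : Subgroup G, N.Normal ∧ N.FiniteIndex ∧
      (∀ (i : Fin n) (g : G) (x y : X),
        (∃ a ∈ g • W i, dist x a ≤ R) → (∃ a ∈ g • W i, dist y a ≤ R) →
        (∃ m ∈ N, m • x = y) →
        ∃ k : G, k ∈ N ∧ k ∈ Subgroup.map (MulAut.conj g).toMonoidHom (H i) ∧
          k • x = y) ∧
      (∀ (i : Fin n) (g m : G), m ∈ N → m • (g • W i) ≠ g • W i →
        ∀ x ∈ g • W i, ∀ y ∈ m • (g • W i), 2 * R ≤ dist x y) := by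
  classical
  -- cocompactness data for each hyperplane
  choose w D hwW hD using hWcocpt
  -- consequence of separability: elements outside `H i` are excluded by a
  -- finite index overgroup of `H i`
  have sep' : ∀ (i : Fin n) (f : G), f ∉ H i →
      ∃ K : Subgroup G, H i ≤ K ∧ K.FiniteIndex ∧ f ∉ K := by
    intro i f hf
    by_contra hcon
    push_neg at hcon
    apply hf
    rw [hsep i]
    simp only [Subgroup.mem_iInf, Set.mem_setOf_eq, and_imp]
    intro K hK1 hK2
    exact hcon K hK1 hK2
  choose Kf hKf1 hKf2 hKf3 using sep'
  -- total choice function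
  set K' : Fin n → G → Subgroup G := fun i f =>
    if h : f ∈ H i then ⊤ else Kf i f h with hK'def
  have hK'H : ∀ (i : Fin n) (f : G), H i ≤ K' i f := by
    intro i f
    by_cases h : f ∈ H i
    · simp [hK'def, h]
    · simpa [hK'def, h] using hKf1 i f h
  have hK'fin : ∀ (i : Fin n) (f : G), (K' i f).FiniteIndex := by
    intro i f
    by_cases h : f ∈ H i
    · simp only [hK'def, h, dif_pos]
      exact Subgroup.instFiniteIndexTop
    · simpa [hK'def, h] using hKf2 i f h
  have hK'f : ∀ (i : Fin n) (f : G) (h : f ∉ H i), f ∉ K' i f := by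
    intro i f h
    simpa [hK'def, h] using hKf3 i f h
  -- the finite sets of "short" elements
  have hSfin : ∀ i : Fin n, {g : G | dist (w i) (g • w i) ≤ 2 * R + 2 * D i}.Finite :=
    fun i => hproper (w i) (2 * R + 2 * D i)
  set T : Fin n → Finset G := fun i => (hSfin i).toFinset with hTdef
  -- the subgroup
  set M : Subgroup G := ⨅ i : Fin n, ⨅ f ∈ T i, K' i f with hMdef
  have hMfin : M.FiniteIndex := by
    apply Subgroup.finiteIndex_iInf
    intro i
    exact Subgroup.finiteIndex_iInf' _ (fun f _ => hK'fin i f)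
  set N : Subgroup G := M.normalCore with hNdef
  haveI : M.FiniteIndex := hMfin
  have hNfin : N.FiniteIndex := Subgroup.finiteIndex_normalCore M
  have hNnormal : N.Normal := Subgroup.normalCore_normal M
  have hNle : ∀ (i : Fin n) (f : G), f ∈ T i → N ≤ K' i f := by
    intro i f hf
    refine (Subgroup.normalCore_le M).trans ?_
    exact (iInf_le _ i).trans (iInf₂_le f hf)
  -- key lemma: an element of N moving W i within 2R of itself lies in H i
  have key : ∀ (i : Fin n) (m : G), m ∈ N →
      (∃ a ∈ W i, ∃ b ∈ W i, dist a (m • b) ≤ 2 * R) → m ∈ H i := by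
    rintro i m hm ⟨a, ha, b, hb, hab⟩
    by_contra hmH
    obtain ⟨h, hh, hha⟩ := hD i a ha
    obtain ⟨h', hh', hhb⟩ := hD i b hb
    set f : G := h⁻¹ * m * h' with hfdef
    have hfT : f ∈ T i := by
      rw [hTdef]
      simp only [Set.Finite.mem_toFinset, Set.mem_setOf_eq]
      have e0 : h • f • w i = m • h' • w i := by
        rw [smul_smul, smul_smul, hfdef]
        congr 1
        group
      have e1 : dist (w i) (f • w i) = dist (h • w i) (m • (h' • w i)) := by
        rw [← hiso h (w i) (f • w i), e0]
      calc dist (w i) (f • w i)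
          = dist (h • w i) (m • (h' • w i)) := e1
        _ ≤ dist (h • w i) a + dist a (m • b) + dist (m • b) (m • (h' • w i)) :=
            dist_triangle4 _ _ _ _
        _ = dist a (h • w i) + dist a (m • b) + dist b (h' • w i) := by
            rw [dist_comm (h • w i) a, hiso m]
        _ ≤ D i + 2 * R + D i := add_le_add (add_le_add hha hab) hhb
        _ = 2 * R + 2 * D i := by ring
    have hfH : f ∉ H i := by
      intro hf
      apply hmH
      have hmeq : m = h * f * h'⁻¹ := by rw [hfdef]; group
      rw [hmeq]
      exact mul_mem (mul_mem hh hf) (inv_mem hh')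
    apply hK'f i f hfH
    have hHle := hK'H i f
    exact mul_mem (mul_mem (hHle (inv_mem hh)) (hNle i f hfT hm)) (hHle hh')
  refine ⟨N, hNnormal, hNfin, ?_, ?_⟩
  · -- R-embedding
    rintro i g x y ⟨a, haW, hxa⟩ ⟨b, hbW, hyb⟩ ⟨m, hmN, hmxy⟩
    obtain ⟨a', ha'W, rfl⟩ := haW
    obtain ⟨b', hb'W, rfl⟩ := hbW
    set m' : G := g⁻¹ * m * g with hm'def
    have hm'N : m' ∈ N := by
      have := hNnormal.conj_mem m hmN g⁻¹
      simpa [hm'def, mul_assoc] using this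
    have hm'H : m' ∈ H i := by
      apply key i m' hm'N
      refine ⟨b', hb'W, a', ha'W, ?_⟩
      have e1 : dist b' (m' • a') = dist (g • b') (m • (g • a')) := by
        rw [← hiso g b' (m' • a')]
        congr 1
        rw [smul_smul, smul_smul, hm'def]
        congr 1
        group
      rw [e1]
      calc dist (g • b') (m • (g • a'))
          ≤ dist (g • b') (m • x) + dist (m • x) (m • (g • a')) := dist_triangle _ _ _
        _ = dist (g • b') y + dist x (g • a') := by
            rw [hiso m x (g • a'), hmxy]
        _ ≤ R + R := by
            have h1 : dist (g • b') y ≤ R := by rw [dist_comm]; exact hyb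
            exact add_le_add h1 hxa
        _ = 2 * R := by ring
    refine ⟨m, hmN, ?_, hmxy⟩
    refine Subgroup.mem_map.mpr ⟨m', hm'H, ?_⟩
    show (MulAut.conj g) m' = m
    rw [MulAut.conj_apply, hm'def]
    group
  · -- separation of distinct elevations
    intro i g m hmN hne x hx y hy
    obtain ⟨a, haW, rfl⟩ := hx
    obtain ⟨c, hcW, rfl⟩ := hy
    obtain ⟨b, hbW, rfl⟩ := hcW
    set m' : G := g⁻¹ * m * g with hm'def
    have hm'N : m' ∈ N := by
      have := hNnormal.conj_mem m hmN g⁻¹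
      simpa [hm'def, mul_assoc] using this
    have hm'H : m' ∉ H i := by
      intro h
      apply hne
      calc m • g • W i = (m * g) • W i := smul_smul m g (W i)
        _ = (g * m') • W i := by rw [hm'def]; congr 1; group
        _ = g • (m' • W i) := (smul_smul g m' (W i)).symm
        _ = g • W i := by rw [(hstab i m').mpr h]
    have hfar : ∀ a ∈ W i, ∀ b ∈ W i, 2 * R < dist a (m' • b) := by
      by_contra hcon
      push_neg at hcon
      obtain ⟨a₀, ha₀, b₀, hb₀, hle⟩ := hcon
      exact hm'H (key i m' hm'N ⟨a₀, ha₀, b₀, hb₀, hle⟩)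
    have e1 : dist (g • a) (m • (g • b)) = dist a (m' • b) := by
      rw [← hiso g a (m' • b)]
      congr 1
      rw [smul_smul, smul_smul, hm'def]
      congr 1
      group
    rw [e1]
    exact le_of_lt (hfar a haW b hbW)
end

section
/- Let (G, 𝒫) be relatively hyperbolic, let G' ⊴ G be a finite index normal subgroup with induced peripheral structure (G', 𝒫'), and let {N'_j ⊴ P'_j} be equivariantly chosen filling kernels: whenever gP'_jg⁻¹ and hP'_kh⁻¹ lie in Pᵢ ∈ 𝒫, then gN'_jg⁻¹ = hN'_kh⁻¹ and this common subgroup is normal in Pᵢ. Then the equivariant filling G' → G'(N'₁, ..., N'_M) determines a filling G → G(N₁, ..., N_m) (taking Nᵢ ⊴ Pᵢ to be the common conjugate of the kernels lying in Pᵢ) such that the image Ḡ' of G' is a finite index normal subgroup of Ḡ = G(N₁, ..., N_m) with [Ḡ : Ḡ'] ≤ [G : G'], and the kernels of the two quotient maps coincide as subgroups of G. -/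
section Aux

variable {G : Type*} [Group G]

private lemma cmap_cmap (a b : G) (H : Subgroup G) :
    Subgroup.map (MulAut.conj a).toMonoidHom (Subgroup.map (MulAut.conj b).toMonoidHom H) =
      Subgroup.map (MulAut.conj (a * b)).toMonoidHom H := by
  rw [Subgroup.map_map]
  congr 1
  ext x
  simp [mul_assoc]

private lemma cmap_one (H : Subgroup G) :
    Subgroup.map (MulAut.conj (1 : G)).toMonoidHom H = H := by
  ext x; simp

private lemma cmap_normal (g : G) (H : Subgroup G) [H.Normal] :
    Subgroup.map (MulAut.conj g).toMonoidHom H = H := by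
  ext x
  rw [Subgroup.mem_map_equiv]
  constructor
  · intro h
    have := Subgroup.Normal.conj_mem ‹H.Normal› _ h g
    simpa [mul_assoc] using this
  · intro h
    have := Subgroup.Normal.conj_mem ‹H.Normal› _ h g⁻¹
    simpa [mul_assoc] using this

private lemma cmap_apply_eq (a b : G) (H K : Subgroup G)
    (h : Subgroup.map (MulAut.conj b).toMonoidHom H = K) :
    Subgroup.map (MulAut.conj (a * b)).toMonoidHom H =
      Subgroup.map (MulAut.conj a).toMonoidHom K := by
  rw [← h, cmap_cmap]

end Aux
/-- **Equivariant fillings of a finite index normal subgroup induce fillings of the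
whole group** (Proposition 9.10 of the paper).

Let `(G, 𝒫)` be relatively hyperbolic, let `G' ⊴ G` be of finite index with induced
peripheral structure `(G', 𝒫')` (each `P'_j` is `g P_i g⁻¹ ∩ G'` for some `i, g`, and
every infinite such intersection is `G'`-conjugate to some `P'_j`), and let
`{N'_j ⊴ P'_j}` be equivariantly chosen filling kernels:  whenever `gP'_jg⁻¹` and
`hP'_kh⁻¹` lie in `P_i`, then `gN'_jg⁻¹ = hN'_kh⁻¹` and this common subgroup is normal
in `P_i`.  Then there are filling kernels `N_i ⊴ P_i` (the common conjugates of the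
`N'_j` lying in `P_i`) such that the normal closure in `G` of `⋃ N_i` equals the normal
closure in `G'` of `⋃ N'_j` (the two filling kernels coincide as subgroups of `G`), and
the image `Ḡ'` of `G'` in `Ḡ = G(N₁, …, N_m)` is a finite index normal subgroup with
`[Ḡ : Ḡ'] ≤ [G : G']`. -/
theorem equivariant_filling_induces_filling
    {G : Type*} [Group G] {ι ι' : Type*}
    (G' : Subgroup G) [G'.Normal] [G'.FiniteIndex]
    (P : ι → Subgroup G) (P' : ι' → Subgroup G)
    (hP'le : ∀ j, P' j ≤ G')
    (hP'rep : ∀ j, ∃ (i : ι) (g : G),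
      P' j = Subgroup.map (MulAut.conj g).toMonoidHom (P i) ⊓ G')
    (hfull : ∀ (i : ι) (g : G), ∃ (j : ι') (g' : G), g' ∈ G' ∧
      Subgroup.map (MulAut.conj g').toMonoidHom (P' j) =
        Subgroup.map (MulAut.conj g).toMonoidHom (P i) ⊓ G')
    (N' : ι' → Subgroup G)
    (hN'le : ∀ j, N' j ≤ P' j)
    (hN'norm : ∀ j, ((N' j).subgroupOf (P' j)).Normal)
    -- the filling kernels are equivariantly chosen:
    (hequiv : ∀ (i : ι) (j k : ι') (g h : G),
      Subgroup.map (MulAut.conj g).toMonoidHom (P' j) ≤ P i →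
      Subgroup.map (MulAut.conj h).toMonoidHom (P' k) ≤ P i →
      Subgroup.map (MulAut.conj g).toMonoidHom (N' j) =
        Subgroup.map (MulAut.conj h).toMonoidHom (N' k) ∧
      ((Subgroup.map (MulAut.conj g).toMonoidHom (N' j)).subgroupOf (P i)).Normal) :
    ∃ N : ι → Subgroup G,
      (∀ i, N i ≤ P i ∧ ((N i).subgroupOf (P i)).Normal ∧
        ∃ (j : ι') (g : G),
          Subgroup.map (MulAut.conj g).toMonoidHom (P' j) ≤ P i ∧
          N i = Subgroup.map (MulAut.conj g).toMonoidHom (N' j)) ∧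
      -- the kernels of the two fillings coincide as subgroups of `G`:
      Subgroup.normalClosure (⋃ i, (N i : Set G)) =
        Subgroup.closure {x : G | ∃ g' ∈ G', ∃ (j : ι'), ∃ n ∈ N' j,
          x = g' * n * g'⁻¹} ∧
      -- the image of `G'` is a finite index normal subgroup of the filled group:
      (Subgroup.map
        (QuotientGroup.mk' (Subgroup.normalClosure (⋃ i, (N i : Set G)))) G').Normal ∧
      (Subgroup.map
        (QuotientGroup.mk' (Subgroup.normalClosure (⋃ i, (N i : Set G)))) G').FiniteIndex ∧
      (Subgroup.map
        (QuotientGroup.mk' (Subgroup.normalClosure (⋃ i, (N i : Set G)))) G').index ≤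
        G'.index := by

  classical
  -- choose for each `i` a representative peripheral `P' (j i)` conjugated into `P i`
  have hchoice : ∀ i : ι, ∃ (j : ι') (c : G), c ∈ G' ∧
      Subgroup.map (MulAut.conj c).toMonoidHom (P' j) = P i ⊓ G' := by
    intro i
    obtain ⟨j, c, hcG, hc⟩ := hfull i 1
    exact ⟨j, c, hcG, by rwa [cmap_one] at hc⟩
  choose j c hcG hc using hchoice
  have hle : ∀ i, Subgroup.map (MulAut.conj (c i)).toMonoidHom (P' (j i)) ≤ P i := by
    intro i; rw [hc i]; exact inf_le_left
  set N : ι → Subgroup G :=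
    fun i => Subgroup.map (MulAut.conj (c i)).toMonoidHom (N' (j i)) with hN
  -- the key equivariance consequence: any conjugate of a kernel is a `G'`-conjugate of
  -- some kernel
  have key : ∀ (y : G) (jx : ι'), ∃ h' ∈ G', ∃ k : ι',
      Subgroup.map (MulAut.conj y).toMonoidHom (N' jx) =
        Subgroup.map (MulAut.conj h').toMonoidHom (N' k) := by
    intro y jx
    obtain ⟨i, g, hrep⟩ := hP'rep jx
    obtain ⟨k, h', hh'G, hk⟩ := hfull i (y * g)
    -- `map (conj y) (P' jx) = map (conj h') (P' k)`
    have h1 : Subgroup.map (MulAut.conj y).toMonoidHom (P' jx) =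
        Subgroup.map (MulAut.conj h').toMonoidHom (P' k) := by
      rw [hrep, Subgroup.map_inf _ _ _ (MulAut.conj y).injective, cmap_cmap,
        cmap_normal y G', hk]
    have h2 : Subgroup.map (MulAut.conj (h'⁻¹ * y)).toMonoidHom (P' jx) = P' k := by
      have := cmap_apply_eq h'⁻¹ y (P' jx) _ h1
      rwa [cmap_cmap, inv_mul_cancel, cmap_one] at this
    obtain ⟨i₀, g₀, hk0⟩ := hP'rep k
    have h3 : Subgroup.map (MulAut.conj g₀⁻¹).toMonoidHom (P' k) ≤ P i₀ := by
      rw [hk0, Subgroup.map_inf _ _ _ (MulAut.conj g₀⁻¹).injective, cmap_cmap,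
        inv_mul_cancel, cmap_one]
      exact inf_le_left
    have h4 : Subgroup.map (MulAut.conj (g₀⁻¹ * (h'⁻¹ * y))).toMonoidHom (P' jx) ≤ P i₀ := by
      rw [← cmap_cmap, h2]; exact h3
    obtain ⟨heq, -⟩ := hequiv i₀ jx k (g₀⁻¹ * (h'⁻¹ * y)) g₀⁻¹ h4 h3
    -- cancel `g₀⁻¹`
    have h5 : Subgroup.map (MulAut.conj (h'⁻¹ * y)).toMonoidHom (N' jx) = N' k := by
      have := cmap_apply_eq g₀ _ (N' jx) _ heq
      rw [cmap_cmap, mul_inv_cancel, cmap_one] at this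
      rw [show g₀ * (g₀⁻¹ * (h'⁻¹ * y)) = h'⁻¹ * y by group] at this
      exact this
    refine ⟨h', hh'G, k, ?_⟩
    have := cmap_apply_eq h' _ (N' jx) _ h5
    rwa [show h' * (h'⁻¹ * y) = y by group] at this
  -- also: every `N' jx` is contained in the normal closure of the `N i`
  have hN'sub : ∀ jx : ι', (N' jx : Set G) ⊆
      (Subgroup.normalClosure (⋃ i, (N i : Set G)) : Set G) := by
    intro jx
    obtain ⟨i, g, hrep⟩ := hP'rep jx
    have h3 : Subgroup.map (MulAut.conj g⁻¹).toMonoidHom (P' jx) ≤ P i := by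
      rw [hrep, Subgroup.map_inf _ _ _ (MulAut.conj g⁻¹).injective, cmap_cmap,
        inv_mul_cancel, cmap_one]
      exact inf_le_left
    obtain ⟨heq, -⟩ := hequiv i jx (j i) g⁻¹ (c i) h3 (hle i)
    -- `N' jx = map (conj g) (N i)`
    have h6 : N' jx = Subgroup.map (MulAut.conj g).toMonoidHom (N i) := by
      have := cmap_apply_eq g _ (N' jx) _ heq
      rwa [mul_inv_cancel, cmap_one] at this
    intro x hx
    rw [h6] at hx
    obtain ⟨n, hn, rfl⟩ := hx
    have hnNC : n ∈ Subgroup.normalClosure (⋃ i, (N i : Set G)) :=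
      Subgroup.subset_normalClosure (Set.mem_iUnion.2 ⟨i, hn⟩)
    simpa using Subgroup.Normal.conj_mem (Subgroup.normalClosure_normal) n hnNC g
  -- the generating set of the `G'`-filling
  set S : Set G := {x : G | ∃ g' ∈ G', ∃ (jx : ι'), ∃ n ∈ N' jx, x = g' * n * g'⁻¹}
    with hS
  -- `S` is conjugation invariant
  have hSconj : Group.conjugatesOfSet S ⊆ S := by
    intro x hx
    rw [Group.mem_conjugatesOfSet_iff] at hx
    obtain ⟨a, ⟨g', hg', jx, n, hn, rfl⟩, hconj⟩ := hx
    obtain ⟨u, rfl⟩ := isConj_iff.1 hconj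
    obtain ⟨h', hh', k, hk⟩ := key (u * g') jx
    have : (u * g') * n * (u * g')⁻¹ ∈
        Subgroup.map (MulAut.conj (u * g')).toMonoidHom (N' jx) :=
      ⟨n, hn, by simp [mul_assoc]⟩
    rw [hk] at this
    obtain ⟨m, hm, hmx⟩ := this
    refine ⟨h', hh', k, m, hm, ?_⟩
    rw [show u * (g' * n * g'⁻¹) * u⁻¹ = (u * g') * n * (u * g')⁻¹ by group, ← hmx]
    simp [mul_assoc]
  -- the two filling kernels coincide
  have hmain : Subgroup.normalClosure (⋃ i, (N i : Set G)) = Subgroup.closure S := by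
    apply le_antisymm
    · -- first: `closure S` is normal since `S` is conjugation invariant
      have hcl : Subgroup.closure S = Subgroup.normalClosure S := by
        apply le_antisymm
        · exact Subgroup.closure_mono Group.subset_conjugatesOfSet
        · exact Subgroup.closure_mono hSconj
      have hnormal : (Subgroup.closure S).Normal := by
        rw [hcl]; exact Subgroup.normalClosure_normal
      apply @Subgroup.normalClosure_le_normal _ _ _ _ hnormal
      rintro x hx
      rw [Set.mem_iUnion] at hx
      obtain ⟨i, hxi⟩ := hx
      obtain ⟨n, hn, rfl⟩ := hxi
      exact Subgroup.subset_closure ⟨c i, hcG i, j i, n, hn, by simp [mul_assoc]⟩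
    · rw [Subgroup.closure_le]
      rintro x ⟨g', hg', jx, n, hn, rfl⟩
      have hnNC := hN'sub jx hn
      exact Subgroup.Normal.conj_mem Subgroup.normalClosure_normal n hnNC g'
  -- the normal closure is contained in `G'`
  have hNCle : Subgroup.normalClosure (⋃ i, (N i : Set G)) ≤ G' := by
    rw [hmain, Subgroup.closure_le]
    rintro x ⟨g', hg', jx, n, hn, rfl⟩
    exact mul_mem (mul_mem hg' (hP'le jx (hN'le jx hn))) (inv_mem hg')
  -- compute the index of the image of `G'`
  have hindex : (Subgroup.map
      (QuotientGroup.mk' (Subgroup.normalClosure (⋃ i, (N i : Set G)))) G').index =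
      G'.index := by
    rw [Subgroup.index_map, QuotientGroup.ker_mk',
      sup_of_le_left hNCle,
      MonoidHom.range_eq_top_of_surjective _ (QuotientGroup.mk'_surjective _),
      Subgroup.index_top, mul_one]
  refine ⟨N, fun i => ?_, hmain, ?_, ⟨?_⟩, ?_⟩
  · refine ⟨?_, ?_, j i, c i, hle i, rfl⟩
    · exact le_trans (Subgroup.map_mono (hN'le (j i))) (hle i)
    · exact (hequiv i (j i) (j i) (c i) (c i) (hle i) (hle i)).2
  · exact Subgroup.Normal.map ‹G'.Normal› _ (QuotientGroup.mk'_surjective _)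
  · rw [hindex]; exact Subgroup.FiniteIndex.index_ne_zero
  · rw [hindex]
end
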